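/- Let $f$ be convex and continuously differentiable, $X$ compact, $Z$ a linear subspace, $\rho>0$, $\omega\in Z^\perp$ fixed. Suppose $(x^k,z^k)\in\operatorname{conv}(X)\times Z$ satisfy $z^k\in\arg\min_{z\in Z}\|Qx^k-z\|$ for each $k$ and $(x^k,z^k)\to(x^*,z^*)$ where $(x^*,z^*)$ minimizes $L_\rho(\cdot,\cdot,\omega)$ over $\operatorname{conv}(X)\times Z$. Then $\lim_{k\to\infty}\widecheck\phi(\omega+\rho(Qx^k-z^k),x^k)=L_\rho(x^*,z^*,\omega)+\tfrac{\rho}{2}\|Qx^*-z^*\|_2^2$. -/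

import Mathlib

open RealInnerProductSpace Filter Topology

/-- `φ̌(ω, x̄)`, minimized over `conv(X)`. -/
noncomputable def phiCheck {n q : ℕ} (f : EuclideanSpace ℝ (Fin n) → ℝ)
    (Q : EuclideanSpace ℝ (Fin n) →ₗ[ℝ] EuclideanSpace ℝ (Fin q))
    (X : Set (EuclideanSpace ℝ (Fin n))) (ω : EuclideanSpace ℝ (Fin q))
    (xbar : EuclideanSpace ℝ (Fin n)) : ℝ :=
  sInf {r : ℝ | ∃ x ∈ convexHull ℝ X, r = f xbar + ⟪gradient f xbar, x - xbar⟫ + ⟪ω, Q x⟫}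

noncomputable def augL {n q : ℕ} (f : EuclideanSpace ℝ (Fin n) → ℝ)
    (Q : EuclideanSpace ℝ (Fin n) →ₗ[ℝ] EuclideanSpace ℝ (Fin q)) (ρ : ℝ)
    (x : EuclideanSpace ℝ (Fin n)) (z ω : EuclideanSpace ℝ (Fin q)) : ℝ :=
  f x + ⟪ω, Q x⟫ + ρ / 2 * ‖Q x - z‖ ^ 2

/-!
At the limit point, `(x*, z*)` minimises `L_ρ(·, ·, ω)` over `conv(X) × Z`, so both first-order
conditions hold: with `ω* = ω + ρ (Q x* - z*)`, the vector `∇f(x*) + Qᵀ ω*` makes a nonnegative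
inner product with every `y - x*`, `y ∈ conv(X)`, and `ρ (Q x* - z*)` is orthogonal to `Z`.
The first says that `x*` attains the infimum defining `φ̌(ω*, x*)`, so that
`φ̌(ω*, x*) = f(x*) + ⟪ω*, Q x*⟫`, and the second (applied to `z* ∈ Z`) turns this into
`L_ρ(x*, z*, ω) + ρ/2 ‖Q x* - z*‖²`. Finally `φ̌` is jointly continuous, being the infimum over
the bounded set `conv(X)` of a jointly continuous function, so it passes to the limit.
-/

section InfOverBoundedSet

variable {γ E α : Type*} [TopologicalSpace γ] [PseudoMetricSpace E] [ProperSpace E]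
  [ConditionallyCompleteLinearOrder α] [TopologicalSpace α] [OrderTopology α]

theorem csInf_image_closure {F : E → α} (hF : Continuous F) {K : Set E}
    (hK : Bornology.IsBounded K) (hne : K.Nonempty) :
    sInf (F '' closure K) = sInf (F '' K) := by
  have hcpt : IsCompact (F '' closure K) := hK.isCompact_closure.image hF
  have hglb : IsGLB (F '' closure K) (sInf (F '' closure K)) :=
    isGLB_csInf ((hne.mono subset_closure).image F) hcpt.bddBelow
  rw [← isGLB_iff_of_subset_of_subset_closure (Set.image_mono subset_closure)
    (image_closure_subset_closure_image hF)] at hglb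
  exact (hglb.csInf_eq (hne.image F)).symm

theorem Bornology.IsBounded.continuous_sInf_image {f : γ → E → α} {K : Set E}
    (hK : Bornology.IsBounded K) (hf : Continuous ↿f) : Continuous fun c => sInf (f c '' K) := by
  rcases K.eq_empty_or_nonempty with rfl | hne
  · exact continuous_const.congr fun c => by rw [Set.image_empty]
  have hclosure (c : γ) : sInf (f c '' K) = sInf (f c '' closure K) :=
    (csInf_image_closure (hf.comp (.prodMk_right c)) hK hne).symm
  simp only [hclosure]
  exact hK.isCompact_closure.continuous_sInf hf

end InfOverBoundedSet

theorem IsMinOn.inner_gradient_sub_nonneg {E : Type*} [NormedAddCommGroup E]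
    [InnerProductSpace ℝ E] [CompleteSpace E] {g : E → ℝ} {s : Set E} {a g' y : E}
    (hs : Convex ℝ s) (hmin : IsMinOn g s a) (hg : HasGradientAt g g' a) (ha : a ∈ s)
    (hy : y ∈ s) : 0 ≤ ⟪g', y - a⟫ := by
  simpa using hmin.localize.hasFDerivWithinAt_nonneg hg.hasFDerivAt.hasFDerivWithinAt
    (sub_mem_posTangentConeAt_of_segment_subset (hs.segment_subset ha hy))

theorem IsMinOn.gradient_mem_orthogonal {E : Type*} [NormedAddCommGroup E]
    [InnerProductSpace ℝ E] [CompleteSpace E] {g : E → ℝ} {Z : Submodule ℝ E} {a g' : E}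
    (hmin : IsMinOn g Z a) (hg : HasGradientAt g g' a) (ha : a ∈ Z) : g' ∈ Zᗮ := by
  refine (Submodule.mem_orthogonal' Z g').2 fun w hw => le_antisymm ?_ ?_
  · simpa [inner_neg_right] using hmin.inner_gradient_sub_nonneg Z.convex hg ha (Z.sub_mem ha hw)
  · simpa using hmin.inner_gradient_sub_nonneg Z.convex hg ha (Z.add_mem ha hw)

section

variable {n q : ℕ} {f : EuclideanSpace ℝ (Fin n) → ℝ}
  {Q : EuclideanSpace ℝ (Fin n) →ₗ[ℝ] EuclideanSpace ℝ (Fin q)} {X : Set (EuclideanSpace ℝ (Fin n))}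

theorem phiCheck_eq_sInf_image (ω : EuclideanSpace ℝ (Fin q)) (xbar : EuclideanSpace ℝ (Fin n)) :
    phiCheck f Q X ω xbar =
      sInf ((fun x => f xbar + ⟪gradient f xbar, x - xbar⟫ + ⟪ω, Q x⟫) '' convexHull ℝ X) := by
  simp only [phiCheck, Set.image, eq_comm]

theorem phiCheck_eq_of_inner_nonneg {ω : EuclideanSpace ℝ (Fin q)}
    {xbar : EuclideanSpace ℝ (Fin n)} (hxbar : xbar ∈ convexHull ℝ X)
    (hopt : ∀ y ∈ convexHull ℝ X, 0 ≤ ⟪gradient f xbar + Q.adjoint ω, y - xbar⟫) :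
    phiCheck f Q X ω xbar = f xbar + ⟪ω, Q xbar⟫ := by
  rw [phiCheck_eq_sInf_image]
  refine IsLeast.csInf_eq ⟨⟨xbar, hxbar, by simp⟩, ?_⟩
  rintro _ ⟨y, hy, rfl⟩
  have := hopt y hy
  simp only [inner_add_left, LinearMap.adjoint_inner_left, inner_sub_right] at this ⊢
  linarith

theorem continuous_phiCheck (hf : ContDiff ℝ 1 f) (hX : IsCompact X) :
    Continuous fun p : EuclideanSpace ℝ (Fin q) × EuclideanSpace ℝ (Fin n) =>
      phiCheck f Q X p.1 p.2 := by
  simp only [phiCheck_eq_sInf_image]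
  have hgrad : Continuous (gradient f) :=
    (InnerProductSpace.toDual ℝ _).symm.continuous.comp (hf.continuous_fderiv one_ne_zero)
  have hQ : Continuous Q := Q.continuous_of_finiteDimensional
  refine ((isBounded_convexHull (s := X)).2 hX.isBounded).continuous_sInf_image ?_
  fun_prop

theorem hasGradientAt_augL_left {x : EuclideanSpace ℝ (Fin n)} (hf : DifferentiableAt ℝ f x)
    (ρ : ℝ) (z ω : EuclideanSpace ℝ (Fin q)) :
    HasGradientAt (fun x => augL f Q ρ x z ω) (gradient f x + Q.adjoint (ω + ρ • (Q x - z))) x := by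
  have hQ := Q.toContinuousLinearMap.hasFDerivAt (x := x)
  have h := (hf.hasGradientAt.hasFDerivAt.add ((innerSL ℝ ω).hasFDerivAt.comp x hQ)).add
    ((hQ.sub_const z).norm_sq.const_mul (ρ / 2))
  rw [hasGradientAt_iff_hasFDerivAt]
  refine h.congr_fderiv ?_
  ext d
  simp only [toDual_gradient, LinearMap.coe_toContinuousLinearMap', map_sub,
    ContinuousLinearMap.sub_comp, add_apply, ContinuousLinearMap.comp_apply, coe_innerSL_apply,
    smul_apply, sub_apply, nsmul_eq_mul, Nat.cast_ofNat, smul_eq_mul, map_add, map_smul,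
    InnerProductSpace.toDual_apply_apply, LinearMap.adjoint_inner_left]
  ring

theorem hasGradientAt_augL_right (ρ : ℝ) (x : EuclideanSpace ℝ (Fin n))
    (z ω : EuclideanSpace ℝ (Fin q)) :
    HasGradientAt (fun z => augL f Q ρ x z ω) (-(ρ • (Q x - z))) z := by
  have h := (((hasFDerivAt_id z).const_sub (Q x)).norm_sq.const_mul (ρ / 2)).const_add
    (f x + ⟪ω, Q x⟫)
  rw [hasGradientAt_iff_hasFDerivAt]
  refine h.congr_fderiv ?_
  ext d
  simp only [id_eq, map_sub, ContinuousLinearMap.comp_neg, ContinuousLinearMap.comp_id, neg_sub,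
    smul_apply, sub_apply, coe_innerSL_apply, nsmul_eq_mul, Nat.cast_ofNat, smul_eq_mul, map_neg,
    map_smul, neg_apply, InnerProductSpace.toDual_apply_apply]
  ring

end

theorem stmt6_general (n q : ℕ) (f : EuclideanSpace ℝ (Fin n) → ℝ)
    (hfd : ContDiff ℝ 1 f)
    (Q : EuclideanSpace ℝ (Fin n) →ₗ[ℝ] EuclideanSpace ℝ (Fin q))
    (X : Set (EuclideanSpace ℝ (Fin n))) (hX : IsCompact X)
    (Z : Submodule ℝ (EuclideanSpace ℝ (Fin q))) (ρ : ℝ)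
    (ω : EuclideanSpace ℝ (Fin q))
    (x : ℕ → EuclideanSpace ℝ (Fin n)) (z : ℕ → EuclideanSpace ℝ (Fin q))
    (xstar : EuclideanSpace ℝ (Fin n)) (zstar : EuclideanSpace ℝ (Fin q))
    (hxs : xstar ∈ convexHull ℝ X) (hzs : zstar ∈ Z)
    (hmin : ∀ x' ∈ convexHull ℝ X, ∀ z' ∈ Z,
      augL f Q ρ xstar zstar ω ≤ augL f Q ρ x' z' ω)
    (hconv : Tendsto (fun k => (x k, z k)) atTop (𝓝 (xstar, zstar))) :
    Tendsto (fun k => phiCheck f Q X (ω + ρ • (Q (x k) - z k)) (x k)) atTop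
      (𝓝 (augL f Q ρ xstar zstar ω + ρ / 2 * ‖Q xstar - zstar‖ ^ 2)) := by
  set a := Q xstar - zstar with ha
  have hxmin : IsMinOn (fun x' => augL f Q ρ x' zstar ω) (convexHull ℝ X) xstar :=
    fun x' hx' => hmin x' hx' zstar hzs
  have hzmin : IsMinOn (fun z' => augL f Q ρ xstar z' ω) Z zstar :=
    fun z' hz' => hmin xstar hxs z' hz'
  have hopt : ∀ y ∈ convexHull ℝ X,
      0 ≤ ⟪gradient f xstar + Q.adjoint (ω + ρ • a), y - xstar⟫ := fun y hy =>
    hxmin.inner_gradient_sub_nonneg (convex_convexHull ℝ X)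
      (hasGradientAt_augL_left (hfd.differentiable one_ne_zero xstar) ρ zstar ω) hxs hy
  have horth : ρ * ⟪a, zstar⟫ = 0 := by
    have := (Submodule.mem_orthogonal' Z _).1
      (hzmin.gradient_mem_orthogonal (hasGradientAt_augL_right ρ xstar zstar ω) hzs) zstar hzs
    simpa [inner_neg_left, real_inner_smul_left] using this
  have hQa : ⟪a, Q xstar⟫ = ‖a‖ ^ 2 + ⟪a, zstar⟫ := by
    rw [← real_inner_self_eq_norm_sq, ← inner_add_right, ha, sub_add_cancel]
  have hlim :
      phiCheck f Q X (ω + ρ • a) xstar = augL f Q ρ xstar zstar ω + ρ / 2 * ‖a‖ ^ 2 := by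
    rw [phiCheck_eq_of_inner_nonneg hxs hopt, augL, inner_add_left, real_inner_smul_left, hQa]
    linear_combination horth
  have hQ : Continuous Q := Q.continuous_of_finiteDimensional
  have hpair : Continuous fun p : EuclideanSpace ℝ (Fin n) × EuclideanSpace ℝ (Fin q) =>
      (ω + ρ • (Q p.1 - p.2), p.1) := by fun_prop
  have hphi := (((continuous_phiCheck (Q := Q) hfd hX).comp hpair).tendsto _).comp hconv
  rw [← hlim]
  exact hphi

theorem stmt6 (n q : ℕ) (f : EuclideanSpace ℝ (Fin n) → ℝ)
    (hf : ConvexOn ℝ Set.univ f) (hfd : ContDiff ℝ 1 f)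
    (Q : EuclideanSpace ℝ (Fin n) →ₗ[ℝ] EuclideanSpace ℝ (Fin q))
    (X : Set (EuclideanSpace ℝ (Fin n))) (hX : IsCompact X) (hXne : X.Nonempty)
    (Z : Submodule ℝ (EuclideanSpace ℝ (Fin q))) (ρ : ℝ) (hρ : 0 < ρ)
    (ω : EuclideanSpace ℝ (Fin q)) (hω : ω ∈ Zᗮ)
    (x : ℕ → EuclideanSpace ℝ (Fin n)) (z : ℕ → EuclideanSpace ℝ (Fin q))
    (hxk : ∀ k, x k ∈ convexHull ℝ X) (hzk : ∀ k, z k ∈ Z)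
    (hzmin : ∀ k, ∀ w ∈ Z, ‖Q (x k) - z k‖ ≤ ‖Q (x k) - w‖)
    (xstar : EuclideanSpace ℝ (Fin n)) (zstar : EuclideanSpace ℝ (Fin q))
    (hxs : xstar ∈ convexHull ℝ X) (hzs : zstar ∈ Z)
    (hmin : ∀ x' ∈ convexHull ℝ X, ∀ z' ∈ Z,
      augL f Q ρ xstar zstar ω ≤ augL f Q ρ x' z' ω)
    (hconv : Tendsto (fun k => (x k, z k)) atTop (𝓝 (xstar, zstar))) :
    Tendsto (fun k => phiCheck f Q X (ω + ρ • (Q (x k) - z k)) (x k)) atTop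
      (𝓝 (augL f Q ρ xstar zstar ω + ρ / 2 * ‖Q xstar - zstar‖ ^ 2)) :=
  stmt6_general n q f hfd Q X hX Z ρ ω x z xstar zstar hxs hzs hmin hconv
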